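/- Let Y/X be an abelian cover of multigraphs with automorphism group G and covering map π. The map cor: Div(X) → Div(Y), induced by v ↦ Σ_{w∈π^{-1}(v)} w, induces an injective morphism of Z[G]-modules cor: Jac(X) → Jac(Y). -/

import Mathlib

/-!  Multigraphs in the Serre formalism: a finite vertex set `V`, a finite set
`D` of darts (oriented edges / half-edges) together with a fixed-point-free
involution `inv` (reversing orientation) and a map `head` assigning to each
dart its terminal vertex.  Edges are the orbits of `inv`; loops and multiple
edges are allowed.  -/
structure Multigraph where
  V : Type
  D : Type
  [fintypeV : Fintype V]
  [fintypeD : Fintype D]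
  [decEqV : DecidableEq V]
  [decEqD : DecidableEq D]
  inv : D → D
  head : D → V
  inv_inv : ∀ d, inv (inv d) = d
  inv_ne : ∀ d, inv d ≠ d

namespace Multigraph

attribute [instance] Multigraph.fintypeV Multigraph.fintypeD Multigraph.decEqV Multigraph.decEqD

variable (Z : Multigraph)

/-- the initial vertex of a dart -/
def tail (d : Z.D) : Z.V := Z.head (Z.inv d)

/-- the number of edges `|E|`: each edge consists of exactly two darts -/
def numEdges : ℕ := Fintype.card Z.D / 2

/-- the degree (valency) of a vertex: the number of darts with head `v`;
loops automatically count twice -/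
def degree (v : Z.V) : ℕ := (Finset.univ.filter fun d : Z.D => Z.head d = v).card

/-- the number of darts with tail `v` and head `w`.  For `v ≠ w` this is the
number of edges joining `v` and `w`; for `v = w` it is twice the number of
loops at `v`. -/
def numDarts (v w : Z.V) : ℕ :=
  (Finset.univ.filter fun d : Z.D => Z.tail d = v ∧ Z.head d = w).card

/-- the number of loops at a vertex -/
def numLoops (v : Z.V) : ℕ := Z.numDarts v v / 2

/-- the number of edges between two (distinct) vertices -/
def numEdgesBetween (v w : Z.V) : ℕ := Z.numDarts v w

def Adj (v w : Z.V) : Prop := ∃ d : Z.D, Z.tail d = v ∧ Z.head d = w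

/-- a multigraph is connected if it is nonempty and any two vertices are
joined by a path -/
def Connected : Prop := Nonempty Z.V ∧ ∀ v w : Z.V, Relation.ReflTransGen Z.Adj v w

/-- no vertices of degree one -/
def NoDegreeOne : Prop := ∀ v : Z.V, Z.degree v ≠ 1

/-- adjacency using only darts from `T` -/
def AdjOn (T : Finset Z.D) (v w : Z.V) : Prop := ∃ d ∈ T, Z.tail d = v ∧ Z.head d = w

/-- A spanning tree, described by its (inv-closed) set of darts: it is
connected, spans all vertices, and has `|V| - 1` edges (i.e. `2(|V|-1)`
darts); a connected spanning subgraph with `|V| - 1` edges is exactly a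
spanning tree. -/
def IsSpanningTree (T : Finset Z.D) : Prop :=
  (∀ d ∈ T, Z.inv d ∈ T) ∧ (∀ v w : Z.V, Relation.ReflTransGen (Z.AdjOn T) v w) ∧
    T.card = 2 * (Fintype.card Z.V - 1)

/-- `κ_Z`, the number of spanning trees of `Z` -/
noncomputable def kappa : ℕ := Nat.card {T : Finset Z.D // Z.IsSpanningTree T}

/-- the adjacency matrix: the diagonal entry at `v` is twice the number of
loops at `v`, the off-diagonal entry at `(v, w)` is the number of edges
joining `v` and `w` -/
def adjMatrix : Matrix Z.V Z.V ℤ := Matrix.of fun v w => (Z.numDarts v w : ℤ)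

/-- the diagonal degree matrix -/
def degMatrix : Matrix Z.V Z.V ℤ := Matrix.diagonal fun v => (Z.degree v : ℤ)

/-- `r_Z = |E_Z| - |V_Z| + 1` -/
def r : ℕ := Z.numEdges + 1 - Fintype.card Z.V

/-- the reciprocal `ζ_Z(u)⁻¹` of the Ihara zeta function, defined through the
three-term determinant formula
`ζ_Z(u)⁻¹ = (1 - u²)^(r-1) · det (I - A u + (D - I) u²)`;
it is a polynomial in `u`. -/
noncomputable def zetaInv : Polynomial ℚ :=
  (1 - Polynomial.X ^ 2) ^ (Z.r - 1) *
    Matrix.det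
      ((1 : Matrix Z.V Z.V (Polynomial ℚ)) -
        (Polynomial.X : Polynomial ℚ) • Z.adjMatrix.map (fun a => (a : Polynomial ℚ)) +
        ((Polynomial.X : Polynomial ℚ) ^ 2) • (Z.degMatrix - 1).map (fun a => (a : Polynomial ℚ)))

/-- `ρ_w(w₀)`: the Laplacian entries -/
def rho (w w0 : Z.V) : ℤ :=
  if w = w0 then (Z.degree w0 : ℤ) - 2 * (Z.numLoops w0 : ℤ)
  else -(Z.numEdgesBetween w w0 : ℤ)

/-- the divisor `φ(w₀) = ∑_w ρ_w(w₀) · w` -/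
noncomputable def lapDiv (w0 : Z.V) : Z.V →₀ ℤ :=
  ∑ w : Z.V, Finsupp.single w (Z.rho w w0)

/-- the Laplacian map `φ : Div(Z) → Div(Z)`, on `Div(Z) = Z.V →₀ ℤ`,
sending `w₀` to `∑_w ρ_w(w₀) · w` -/
noncomputable def lap : (Z.V →₀ ℤ) →ₗ[ℤ] Z.V →₀ ℤ :=
  Finsupp.lsum ℤ fun w0 => LinearMap.toSpanSingleton ℤ _ (Z.lapDiv w0)

/-- the degree map `deg : Div(Z) → ℤ` -/
noncomputable def divDeg : (Z.V →₀ ℤ) →ₗ[ℤ] ℤ :=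
  Finsupp.lsum ℤ fun _ => (LinearMap.id : ℤ →ₗ[ℤ] ℤ)

/-- `Div⁰(Z)`, the divisors of degree zero -/
noncomputable def divZero : Submodule ℤ (Z.V →₀ ℤ) := LinearMap.ker Z.divDeg

/-- `Pr(Z)`, the principal divisors: the image of the Laplacian map -/
noncomputable def prin : Submodule ℤ (Z.V →₀ ℤ) := LinearMap.range Z.lap

end Multigraph

/-- A covering map of multigraphs: maps on vertices and darts commuting with
the structure maps which are local isomorphisms (bijections on stars). -/
structure CoveringMap (Y X : Multigraph) where
  vmap : Y.V → X.V
  dmap : Y.D → X.D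
  head_map : ∀ d, X.head (dmap d) = vmap (Y.head d)
  inv_map : ∀ d, X.inv (dmap d) = dmap (Y.inv d)
  vmap_surj : Function.Surjective vmap
  star_bij : ∀ w : Y.V, Set.BijOn dmap {d | Y.head d = w} {d | X.head d = vmap w}

/-- A Galois (regular) cover of multigraphs `Y/X` with automorphism group `G`:
a covering map together with an action of `G` on `Y` by automorphisms of the
cover which is free and transitive on each vertex fiber (so `G` is identified
with the deck transformation group `Aut(Y/X)`). -/
structure GaloisCover (Y X : Multigraph) (G : Type) [Group G] extends CoveringMap Y X where
  actV : G →* Equiv.Perm Y.V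
  actD : G →* Equiv.Perm Y.D
  act_head : ∀ g d, Y.head (actD g d) = actV g (Y.head d)
  act_inv : ∀ g d, Y.inv (actD g d) = actD g (Y.inv d)
  vmap_act : ∀ g w, vmap (actV g w) = vmap w
  dmap_act : ∀ g d, dmap (actD g d) = dmap d
  act_free : ∀ g w, actV g w = w → g = 1
  fiber_trans : ∀ w w' : Y.V, vmap w = vmap w' → ∃ g : G, actV g w = w'

/-- the first non-vanishing Taylor coefficient of a polynomial `p` at `u = 1` -/
noncomputable def leadingCoeffAtOne {K : Type} [Field K] (p : Polynomial K) : K :=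
  (Polynomial.taylor 1 p).coeff (p.rootMultiplicity 1)

/-- the idempotent `e_χ = |G|⁻¹ ∑_σ χ(σ) σ⁻¹` of `ℂ[G]` attached to a
character `χ` of a finite abelian group `G` -/
noncomputable def charIdem {G : Type} [CommGroup G] [Fintype G] (χ : G →* ℂ) :
    MonoidAlgebra ℂ G :=
  (Fintype.card G : ℂ)⁻¹ • ∑ σ : G, χ σ • MonoidAlgebra.single σ⁻¹ (1 : ℂ)

/-- the complex-conjugate character `χ̄` -/
noncomputable def conjChar {G : Type} [CommGroup G] (χ : G →* ℂ) : G →* ℂ :=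
  (starRingEnd ℂ).toMonoidHom.comp χ

/-- `e = 1 - e_{χ₁}` where `χ₁` is the trivial character -/
noncomputable def eAug (G : Type) [CommGroup G] [Fintype G] : MonoidAlgebra ℂ G :=
  1 - charIdem (1 : G →* ℂ)

/-- the augmentation ideal `I_G = ker(s : ℤ[G] → ℤ)`, as an additive
subgroup of `ℤ[G]` -/
noncomputable def augIdeal (G : Type) [CommGroup G] : AddSubgroup (MonoidAlgebra ℤ G) :=
  AddMonoidHom.ker
    (((Finsupp.lsum ℤ fun _ : G => (LinearMap.id : ℤ →ₗ[ℤ] ℤ)).toAddMonoidHom.comp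
      MonoidAlgebra.coeffAddEquiv.toAddMonoidHom :
      MonoidAlgebra ℤ G →+ ℤ))

namespace GaloisCover

variable {Y X : Multigraph} {G : Type} [CommGroup G] [Fintype G] (C : GaloisCover Y X G)

/-- the matrix `A(σ)`, relative to a choice `s` of one vertex `s v` of `Y` in
the fiber of each vertex `v` of `X`: its `(v, v')` entry is twice the number
of loops at `s v` when `v = v'` and `σ = 1`, and otherwise the number of
edges connecting `s v` to `σ · s v'`. -/
noncomputable def Asigma (s : X.V → Y.V) (σ : G) : Matrix X.V X.V ℤ :=
  Matrix.of fun v v' => (Y.numDarts (s v) (C.actV σ (s v')) : ℤ)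

/-- `A_χ = ∑_σ χ(σ) A(σ)` -/
noncomputable def Achi (s : X.V → Y.V) (χ : G →* ℂ) : Matrix X.V X.V ℂ :=
  ∑ σ : G, χ σ • (C.Asigma s σ).map fun a => (a : ℂ)

/-- the reciprocal `L_{Y/X}(u,χ)⁻¹` of the Artin-Ihara L-function, defined
through the three-term determinant formula
`L_{Y/X}(u,χ)⁻¹ = (1 - u²)^(r_X - 1) · det (I - A_χ u + (D - I) u²)`. -/
noncomputable def LInv (s : X.V → Y.V) (χ : G →* ℂ) : Polynomial ℂ :=
  (1 - Polynomial.X ^ 2) ^ (X.r - 1) *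
    Matrix.det
      ((1 : Matrix X.V X.V (Polynomial ℂ)) -
        (Polynomial.X : Polynomial ℂ) • (C.Achi s χ).map Polynomial.C +
        ((Polynomial.X : Polynomial ℂ) ^ 2) • (X.degMatrix - 1).map fun a => (a : Polynomial ℂ))

/-- `θ*_{Y/X}(1) = ∑_χ L*_{Y/X}(1,χ) e_{χ̄} ∈ ℂ[G]` (a finite sum over all
the characters of `G`) -/
noncomputable def thetaStar (s : X.V → Y.V) : MonoidAlgebra ℂ G :=
  ∑ᶠ χ : G →* ℂ, leadingCoeffAtOne (C.LInv s χ) • charIdem (conjChar χ)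

/-- `ℓ_{w_i} : Div(Y) → ℤ[G]`, on a vertex `w`: `∑_σ ρ_{w_i}(σ·w) σ⁻¹`
(here `w_i = s v`) -/
noncomputable def ell (s : X.V → Y.V) (v : X.V) (w : Y.V) : MonoidAlgebra ℤ G :=
  ∑ σ : G, Y.rho (s v) (C.actV σ w) • MonoidAlgebra.single (σ⁻¹ : G) (1 : ℤ)

/-- the `ℤ[G]`-linear extension of `ell` to `Div(Y)` -/
noncomputable def ellD (s : X.V → Y.V) (v : X.V) (Dv : Y.V →₀ ℤ) : MonoidAlgebra ℤ G :=
  Finsupp.sum Dv fun w c => c • C.ell s v w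

/-- `det_{ℤ[G]}(φ)`: the determinant of the `ℤ[G]`-linear Laplacian `φ` on the
free `ℤ[G]`-module `Div(Y) = ⊕ᵢ ℤ[G]·wᵢ`, computed in the basis `(wᵢ)ᵢ`,
i.e. the determinant of the matrix `(ℓ_{w_i}(w_j))_{i,j}`. -/
noncomputable def lapDet (s : X.V → Y.V) : MonoidAlgebra ℤ G :=
  Matrix.det (Matrix.of fun v v' => C.ell s v (s v'))

/-- the action of an element of `ℤ[G]` on `Div(Y)` -/
noncomputable def smulDiv (x : MonoidAlgebra ℤ G) (Dv : Y.V →₀ ℤ) : Y.V →₀ ℤ :=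
  Finsupp.sum x.coeff fun σ c => c • Finsupp.mapDomain (C.actV σ) Dv

/-- the action of an element of `ℂ[G]` on `Div(Y) ⊗ ℂ` -/
noncomputable def smulDivC (x : MonoidAlgebra ℂ G) (Dv : Y.V →₀ ℂ) : Y.V →₀ ℂ :=
  Finsupp.sum x.coeff fun σ c => c • Finsupp.mapDomain (C.actV σ) Dv

/-- `res : Div(Y) → Div(X)`, sending a vertex `w` to `π(w)` -/
noncomputable def res (Dv : Y.V →₀ ℤ) : X.V →₀ ℤ := Finsupp.mapDomain C.vmap Dv

/-- `cor : Div(X) → Div(Y)`, sending a vertex `v` to `∑_{w ∈ π⁻¹(v)} w` -/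
noncomputable def cor (Dv : X.V →₀ ℤ) : Y.V →₀ ℤ :=
  Finsupp.equivFunOnFinite.symm fun w => Dv (C.vmap w)

/-- the norm element `N_G = ∑_σ σ` acting on `Div(Y)` -/
noncomputable def normMap : (Y.V →₀ ℤ) →ₗ[ℤ] Y.V →₀ ℤ :=
  ∑ σ : G, Finsupp.lmapDomain ℤ ℤ (C.actV σ)

end GaloisCover

/-- An intermediate cover of a Galois cover `Y/X`, corresponding to a subgroup
`H ≤ G = Aut(Y/X)`: a multigraph `Z` (the quotient `Y/H`) which is at the
same time a Galois cover of which `Y` is a Galois `H`-cover (with the action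
of `H` being the restriction of that of `G`) and a cover of `X`, compatibly
with the covering `Y → X`. -/
structure IntermediateCover {Y X : Multigraph} {G : Type} [Group G]
    (C : GaloisCover Y X G) (H : Subgroup G) where
  Z : Multigraph
  upper : GaloisCover Y Z ↥H
  lower : CoveringMap Z X
  actV_compat : ∀ (h : ↥H) (w : Y.V), upper.actV h w = C.actV (h : G) w
  actD_compat : ∀ (h : ↥H) (d : Y.D), upper.actD h d = C.actD (h : G) d
  vmap_compat : ∀ w : Y.V, lower.vmap (upper.vmap w) = C.vmap w
  dmap_compat : ∀ d : Y.D, lower.dmap (upper.dmap d) = C.dmap d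

/-! Since `π` is bijective on stars, `cor` commutes with the Laplacians; `cor D` is
`G`-invariant and has degree `|G| · deg D`. For injectivity, let `cor D = φ_Y N`. The Laplacian
is `G`-equivariant, so for each `σ ∈ G` the divisor `σN - N` is harmonic, and it has degree zero;
by the maximum principle on the connected graph `Y` it vanishes. Hence `N` is `G`-invariant,
i.e. `N = cor M`, and `cor D = cor (φ_X M)` gives `D = φ_X M` because `cor` is injective. -/

open Finset

namespace Multigraph

variable (Z : Multigraph)

lemma tail_inv (d : Z.D) : Z.tail (Z.inv d) = Z.head d := by
  rw [tail, Z.inv_inv]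

lemma head_inv (d : Z.D) : Z.head (Z.inv d) = Z.tail d := rfl

lemma numDarts_comm (v w : Z.V) : Z.numDarts v w = Z.numDarts w v := by
  refine card_bij' (fun d _ => Z.inv d) (fun d _ => Z.inv d) ?_ ?_
    (fun d _ => Z.inv_inv d) (fun d _ => Z.inv_inv d) <;>
  · intro d hd
    simp only [mem_filter, mem_univ, true_and] at hd ⊢
    rw [tail_inv, head_inv]
    exact hd.symm

/-- `inv` pairs up the darts of the loops at `v` without fixed points. -/
lemma two_mul_numLoops (v : Z.V) : 2 * Z.numLoops v = Z.numDarts v v := by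
  refine Nat.mul_div_cancel' ?_
  rw [← ZMod.natCast_eq_zero_iff, numDarts, card_eq_sum_ones, Nat.cast_sum]
  refine sum_involution (fun d _ => Z.inv d) (fun _ _ => by decide)
    (fun d _ _ => Z.inv_ne d) (fun d hd => ?_) (fun d _ => Z.inv_inv d)
  simp only [mem_filter, mem_univ, true_and] at hd ⊢
  rw [tail_inv, head_inv]
  exact hd.symm

lemma rho_eq (w w0 : Z.V) :
    Z.rho w w0 = (if w0 = w then (Z.degree w : ℤ) else 0) - Z.numDarts w0 w := by
  rcases eq_or_ne w w0 with rfl | h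
  · rw [rho, if_pos rfl, if_pos rfl, ← Z.two_mul_numLoops]
    push_cast
    ring
  · rw [rho, if_neg h, if_neg h.symm, numEdgesBetween, Z.numDarts_comm, zero_sub]

lemma lap_apply_eq_sum_rho (N : Z.V →₀ ℤ) (w : Z.V) :
    Z.lap N w = ∑ w0 : Z.V, N w0 * Z.rho w w0 := by
  rw [lap, Finsupp.lsum_apply, Finsupp.sum_apply, Finsupp.sum_fintype _ _ (by simp)]
  refine sum_congr rfl fun w0 _ => ?_
  simp [lapDiv, Finsupp.single_apply]

lemma sum_mul_numDarts (N : Z.V →₀ ℤ) (w : Z.V) :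
    ∑ w0 : Z.V, N w0 * Z.numDarts w0 w = ∑ d ∈ univ.filter (Z.head · = w), N (Z.tail d) := by
  rw [← sum_fiberwise' _ Z.tail N]
  refine sum_congr rfl fun w0 _ => ?_
  rw [sum_const, filter_filter, nsmul_eq_mul, mul_comm, numDarts]
  congr 3
  ext d
  simp [and_comm]

lemma lap_apply (N : Z.V →₀ ℤ) (w : Z.V) :
    Z.lap N w = ∑ d ∈ univ.filter (Z.head · = w), (N w - N (Z.tail d)) := by
  simp only [lap_apply_eq_sum_rho, rho_eq, mul_sub, mul_ite, mul_zero, sum_sub_distrib,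
    sum_ite_eq', mem_univ, if_true, sum_mul_numDarts, sum_const, nsmul_eq_mul, degree]
  ring

lemma divDeg_apply (N : Z.V →₀ ℤ) : Z.divDeg N = ∑ v : Z.V, N v :=
  Finsupp.sum_fintype _ _ fun _ => rfl

lemma apply_tail_eq_of_lap_eq_zero {N : Z.V →₀ ℤ} (h : Z.lap N = 0) {w : Z.V}
    (hmax : ∀ v, N v ≤ N w) {d : Z.D} (hd : Z.head d = w) : N (Z.tail d) = N w := by
  have hsum : ∑ e ∈ univ.filter (Z.head · = w), (N w - N (Z.tail e)) = 0 := by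
    rw [← Z.lap_apply, h, Finsupp.coe_zero, Pi.zero_apply]
  have hnonneg : ∀ e ∈ univ.filter (Z.head · = w), 0 ≤ N w - N (Z.tail e) :=
    fun e _ => sub_nonneg.mpr (hmax _)
  have := (sum_eq_zero_iff_of_nonneg hnonneg).mp hsum d (by simp [hd])
  omega

lemma eq_of_lap_eq_zero (hc : Z.Connected) {N : Z.V →₀ ℤ} (h : Z.lap N = 0) (v v' : Z.V) :
    N v = N v' := by
  have : Nonempty Z.V := hc.1
  obtain ⟨w, -, hmax⟩ := exists_max_image univ N univ_nonempty
  suffices hw : ∀ u, N u = N w by rw [hw v, hw v']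
  intro u
  induction hc.2 u w using Relation.ReflTransGen.head_induction_on with
  | refl => rfl
  | head hadj _ ih =>
    obtain ⟨d, rfl, rfl⟩ := hadj
    exact (Z.apply_tail_eq_of_lap_eq_zero h (fun v => ih ▸ hmax v (mem_univ v)) rfl).trans ih

lemma eq_zero_of_lap_eq_zero_of_divDeg_eq_zero (hc : Z.Connected) {N : Z.V →₀ ℤ}
    (h : Z.lap N = 0) (hdeg : Z.divDeg N = 0) : N = 0 := by
  ext v
  have hconst : Z.divDeg N = Fintype.card Z.V * N v := by
    rw [divDeg_apply, sum_congr rfl fun u _ => Z.eq_of_lap_eq_zero hc h u v, sum_const,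
      nsmul_eq_mul, card_univ]
  have hpos : (0 : ℤ) < Fintype.card Z.V := by
    have : Nonempty Z.V := ⟨v⟩
    exact_mod_cast Fintype.card_pos
  rw [hdeg, eq_comm, mul_eq_zero] at hconst
  exact hconst.resolve_left hpos.ne'

end Multigraph

namespace CoveringMap

variable {Y X : Multigraph} (C : CoveringMap Y X)

lemma vmap_tail (d : Y.D) : C.vmap (Y.tail d) = X.tail (C.dmap d) := by
  rw [Multigraph.tail, Multigraph.tail, C.inv_map, C.head_map]

end CoveringMap

namespace GaloisCover

variable {Y X : Multigraph} {G : Type} [CommGroup G] (C : GaloisCover Y X G)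

lemma cor_apply (D : X.V →₀ ℤ) (w : Y.V) : C.cor D w = D (C.vmap w) := rfl

lemma cor_injective : Function.Injective C.cor := by
  intro D D' h
  ext v
  obtain ⟨w, rfl⟩ := C.vmap_surj v
  rw [← cor_apply, h, cor_apply]

/-- `π` is a bijection from the darts ending at `w` onto those ending at `π w`. -/
lemma cor_lap (M : X.V →₀ ℤ) : C.cor (X.lap M) = Y.lap (C.cor M) := by
  ext w
  rw [cor_apply, Multigraph.lap_apply, Multigraph.lap_apply]
  refine (sum_nbij C.dmap (fun d hd => ?_)
    (fun d₁ h₁ d₂ h₂ => (C.star_bij w).injOn (by simpa using h₁) (by simpa using h₂))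
    (fun e he => ?_) (fun d _ => by rw [cor_apply, cor_apply, C.vmap_tail])).symm
  · simp only [mem_filter, mem_univ, true_and] at hd ⊢
    rw [C.head_map, hd]
  · obtain ⟨d, hd, rfl⟩ := (C.star_bij w).surjOn (by simpa using he)
    exact ⟨d, by simpa using hd, rfl⟩

lemma act_tail (g : G) (d : Y.D) : Y.tail (C.actD g d) = C.actV g (Y.tail d) := by
  rw [Multigraph.tail, C.act_inv, C.act_head, Multigraph.tail]

lemma actV_apply_inv_apply (g : G) (w : Y.V) : C.actV g (C.actV g⁻¹ w) = w := by
  rw [map_inv, Equiv.Perm.coe_inv, Equiv.apply_symm_apply]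

lemma actV_inv_apply_apply (g : G) (w : Y.V) : C.actV g⁻¹ (C.actV g w) = w := by
  rw [map_inv, Equiv.Perm.coe_inv, Equiv.symm_apply_apply]

lemma mapDomain_actV_apply (g : G) (N : Y.V →₀ ℤ) (w : Y.V) :
    Finsupp.mapDomain (C.actV g) N w = N (C.actV g⁻¹ w) := by
  rw [Finsupp.mapDomain_equiv_apply, map_inv]
  rfl

lemma divDeg_mapDomain_actV (g : G) (N : Y.V →₀ ℤ) :
    Y.divDeg (Finsupp.mapDomain (C.actV g) N) = Y.divDeg N := by
  simp only [Multigraph.divDeg_apply, mapDomain_actV_apply]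
  exact Equiv.sum_comp (C.actV g⁻¹) N

lemma mapDomain_actV_cor (g : G) (D : X.V →₀ ℤ) :
    Finsupp.mapDomain (C.actV g) (C.cor D) = C.cor D := by
  ext w
  rw [mapDomain_actV_apply, cor_apply, cor_apply, C.vmap_act]

lemma mapDomain_actV_lap (g : G) (N : Y.V →₀ ℤ) :
    Finsupp.mapDomain (C.actV g) (Y.lap N) = Y.lap (Finsupp.mapDomain (C.actV g) N) := by
  ext w
  rw [mapDomain_actV_apply, Multigraph.lap_apply, Multigraph.lap_apply]
  refine sum_nbij' (C.actD g) (C.actD g⁻¹) (fun d hd => ?_) (fun d hd => ?_)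
    (fun d _ => by simp) (fun d _ => by simp) (fun d _ => ?_)
  · simp only [mem_filter, mem_univ, true_and] at hd ⊢
    rw [C.act_head, hd, actV_apply_inv_apply]
  · simp only [mem_filter, mem_univ, true_and] at hd ⊢
    rw [C.act_head, hd]
  · rw [mapDomain_actV_apply, mapDomain_actV_apply, C.act_tail, actV_inv_apply_apply]

lemma mapDomain_actV_eq_self_of_lap (hc : Y.Connected) {N : Y.V →₀ ℤ}
    (h : ∀ g, Finsupp.mapDomain (C.actV g) (Y.lap N) = Y.lap N) (g : G) :
    Finsupp.mapDomain (C.actV g) N = N := by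
  rw [← sub_eq_zero]
  refine Y.eq_zero_of_lap_eq_zero_of_divDeg_eq_zero hc ?_ ?_
  · rw [map_sub, ← mapDomain_actV_lap, h, sub_self]
  · rw [map_sub, divDeg_mapDomain_actV, sub_self]

lemma exists_cor_eq_of_mapDomain_actV_eq_self {N : Y.V →₀ ℤ}
    (h : ∀ g, Finsupp.mapDomain (C.actV g) N = N) : ∃ M, C.cor M = N := by
  let s := Function.surjInv C.vmap_surj
  refine ⟨Finsupp.equivFunOnFinite.symm fun v => N (s v), ?_⟩
  ext w
  obtain ⟨g, hg⟩ := C.fiber_trans w (s (C.vmap w)) (Function.surjInv_eq C.vmap_surj _).symm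
  calc N (s (C.vmap w)) = Finsupp.mapDomain (C.actV g) N (s (C.vmap w)) := by rw [h]
    _ = N w := by rw [mapDomain_actV_apply, ← hg, actV_inv_apply_apply]

variable [Fintype G]

lemma card_fiber (v : X.V) : (univ.filter (C.vmap · = v)).card = Fintype.card G := by
  obtain ⟨w, rfl⟩ := C.vmap_surj v
  symm
  refine card_nbij (C.actV · w) (fun g _ => by simp [C.vmap_act]) (fun g₁ _ g₂ _ h => ?_)
    (fun w' hw' => ?_)
  · have : C.actV (g₂⁻¹ * g₁) w = w := by
      simp only at h
      rw [map_mul, Equiv.Perm.mul_apply, h, actV_inv_apply_apply]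
    rw [← inv_mul_eq_one.mp (C.act_free _ _ this)]
  · obtain ⟨g, rfl⟩ := C.fiber_trans w w' (by simpa [eq_comm] using hw')
    exact ⟨g, by simp, rfl⟩

lemma divDeg_cor (D : X.V →₀ ℤ) : Y.divDeg (C.cor D) = Fintype.card G * X.divDeg D := by
  simp only [Multigraph.divDeg_apply, cor_apply, mul_sum]
  rw [← sum_fiberwise' univ C.vmap D]
  refine sum_congr rfl fun v _ => ?_
  rw [sum_const, card_fiber, nsmul_eq_mul]

end GaloisCover

theorem cor_induces_injection_on_jacobians_general (X Y : Multigraph)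
    (hYconn : Y.Connected)
    {G : Type} [CommGroup G] [Fintype G] (C : GaloisCover Y X G) :
    (∀ M : X.V →₀ ℤ, ∃ N : Y.V →₀ ℤ, C.cor (X.lap M) = Y.lap N) ∧
    (∀ Dv : X.V →₀ ℤ, X.divDeg Dv = 0 → Y.divDeg (C.cor Dv) = 0) ∧
    (∀ (σ : G) (Dv : X.V →₀ ℤ),
      Finsupp.mapDomain (C.actV σ) (C.cor Dv) = C.cor Dv) ∧
    (∀ Dv : X.V →₀ ℤ, X.divDeg Dv = 0 →
      (∃ N : Y.V →₀ ℤ, C.cor Dv = Y.lap N) → ∃ M : X.V →₀ ℤ, Dv = X.lap M) := by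
  refine ⟨fun M => ⟨C.cor M, C.cor_lap M⟩, fun Dv h => by rw [C.divDeg_cor, h, mul_zero],
    C.mapDomain_actV_cor, ?_⟩
  rintro Dv - ⟨N, hN⟩
  have hN_inv : ∀ σ, Finsupp.mapDomain (C.actV σ) N = N :=
    C.mapDomain_actV_eq_self_of_lap hYconn fun σ => by rw [← hN, C.mapDomain_actV_cor]
  obtain ⟨M, rfl⟩ := C.exists_cor_eq_of_mapDomain_actV_eq_self hN_inv
  exact ⟨M, C.cor_injective (by rw [hN, C.cor_lap])⟩

/-- For an abelian cover `Y/X` with automorphism group `G`,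
the map `cor : Div(X) → Div(Y)` induces an injective morphism of
`ℤ[G]`-modules `cor : Jac(X) → Jac(Y)`: it maps principal divisors to
principal divisors and degree-zero divisors to degree-zero divisors, its
image is `G`-invariant (`G` acts trivially on `Jac(X)`), and a degree-zero
divisor of `X` whose image under `cor` is principal is itself principal. -/
theorem cor_induces_injection_on_jacobians (X Y : Multigraph)
    (hXconn : X.Connected) (hXdeg : X.NoDegreeOne)
    (hYconn : Y.Connected) (hYdeg : Y.NoDegreeOne)
    {G : Type} [CommGroup G] [Fintype G] (C : GaloisCover Y X G) :
    (∀ M : X.V →₀ ℤ, ∃ N : Y.V →₀ ℤ, C.cor (X.lap M) = Y.lap N) ∧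
    (∀ Dv : X.V →₀ ℤ, X.divDeg Dv = 0 → Y.divDeg (C.cor Dv) = 0) ∧
    (∀ (σ : G) (Dv : X.V →₀ ℤ),
      Finsupp.mapDomain (C.actV σ) (C.cor Dv) = C.cor Dv) ∧
    (∀ Dv : X.V →₀ ℤ, X.divDeg Dv = 0 →
      (∃ N : Y.V →₀ ℤ, C.cor Dv = Y.lap N) → ∃ M : X.V →₀ ℤ, Dv = X.lap M) :=
  cor_induces_injection_on_jacobians_general X Y hYconn C
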